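/- In the closeness-reduction graph G' = (V, E ∪ A*) with A* ⊆ {(t,S_i) : S_i ∈ S}, letting d_t = Σ_{u_i ∈ U} d(t,u_i) + Σ_{S_i ∈ S} d(t,S_i), the sum of distances from t to all other nodes equals 3l + m - k + 2 + d_t, and moreover d_t = 3l - |U_A| + 2m - |A*|, where U_A = {u_i ∈ U : ∃ S_j ∈ S with u_i ∈ S_j and (t,S_j) ∈ A*}. -/

import Mathlib

/-! From `t`, the node `v_e` and the pendant nodes `x_i` are at distance 1 and each `w_j` is at
distance 2 (through `v_e`). A set node `S_i` is at distance 1 if `(t, S_i) ∈ A*` and 2 (through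
`v_e`) otherwise. An element `u_j` is at distance 2 if some set `S_i` with `(t, S_i) ∈ A*`
contains it; otherwise no neighbour of `t` is adjacent to `u_j`, and `t, v_e, w_j, u_j` is a
shortest path of length 3. Summing gives both formulas. -/

/-- Vertex type of the closeness-reduction graph built from a 3-Set Cover instance with
universe size `l`, family size `m` and parameter `k`:
`v_e = Sum.inl (Sum.inl ())`, `t = Sum.inl (Sum.inr ())`,
set nodes `S_i = Sum.inr (Sum.inl (Sum.inl i))`,
universe nodes `u_j = Sum.inr (Sum.inl (Sum.inr j))`,
nodes `w_j = Sum.inr (Sum.inr (Sum.inl j))`, and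
pendant nodes `x_i = Sum.inr (Sum.inr (Sum.inr i))`. -/
abbrev CVert (l m k : ℕ) :=
  (Unit ⊕ Unit) ⊕ (Fin m ⊕ Fin l) ⊕ (Fin l ⊕ Fin (l + m - k + 1))

/-- The closeness-reduction graph `G' = (V, E ∪ A*)` built from a 3-Set Cover instance
`(U, S, k)`, where `S i` is the `i`-th 3-element subset of the universe `Fin l` and the
set `A ⊆ Fin m` records the added edges `(t, S_i)` for `i ∈ A`.  Base edges: `(t, v_e)`;
`(x_i, t)` for all `i`; `(w_j, v_e)` and `(w_j, u_j)` for all `j`; `(S_i, v_e)` for all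
`i`; and `(S_i, u_j)` for `u_j ∈ S_i`. -/
def Cgraph (l m k : ℕ) (S : Fin m → Finset (Fin l)) (A : Finset (Fin m)) :
    SimpleGraph (CVert l m k) :=
  SimpleGraph.fromRel (fun a b =>
    match a, b with
    | Sum.inl (Sum.inl _), Sum.inl (Sum.inr _) => True
    | Sum.inr (Sum.inr (Sum.inr _)), Sum.inl (Sum.inr _) => True
    | Sum.inr (Sum.inr (Sum.inl _)), Sum.inl (Sum.inl _) => True
    | Sum.inr (Sum.inr (Sum.inl j)), Sum.inr (Sum.inl (Sum.inr j')) => j = j'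
    | Sum.inr (Sum.inl (Sum.inl _)), Sum.inl (Sum.inl _) => True
    | Sum.inr (Sum.inl (Sum.inl i)), Sum.inr (Sum.inl (Sum.inr j)) => j ∈ S i
    | Sum.inl (Sum.inr _), Sum.inr (Sum.inl (Sum.inl i)) => i ∈ A
    | _, _ => False)

/-- `D(G', v)`: the sum of shortest-path distances from `v` to all other nodes. -/
noncomputable def Dsum {l m k : ℕ} (G : SimpleGraph (CVert l m k)) (v : CVert l m k) : ℕ :=
  ∑ w : CVert l m k, G.dist v w

namespace SimpleGraph

variable {V : Type*} {G : SimpleGraph V} {u v a b : V}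

lemma dist_eq_two_of_adj_of_adj (hne : u ≠ v) (hnadj : ¬G.Adj u v) (hua : G.Adj u a)
    (hav : G.Adj a v) : G.dist u v = 2 := by
  have : G.edist u v = 2 := edist_eq_two_iff.mpr ⟨hne, hnadj, a, hua, hav.symm⟩
  simp [dist, this]

lemma dist_eq_three_of_adj_of_adj_of_adj (hnadj : ¬G.Adj u v)
    (hcommon : ∀ w, G.Adj u w → ¬G.Adj w v) (hua : G.Adj u a) (hab : G.Adj a b)
    (hbv : G.Adj b v) : G.dist u v = 3 := by
  have hne : u ≠ v := by rintro rfl; exact hcommon a hua hua.symm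
  have hlt : 2 < G.edist u v := two_lt_edist_iff.mpr
    ⟨hne, hnadj, Set.eq_empty_of_forall_notMem fun w hw => hcommon w hw.1 hw.2.symm⟩
  have hle : G.edist u v ≤ 3 := by
    simpa using (hua.toWalk.append (hab.toWalk.append hbv.toWalk)).edist_le
  have : G.edist u v = 3 := le_antisymm hle (Order.add_one_le_of_lt hlt)
  simp [dist, this]

end SimpleGraph

lemma Fintype.sum_ite_self_succ {α : Type*} [Fintype α] (p : α → Prop) [DecidablePred p]
    (a : ℕ) :
    ∑ x, (if p x then a else a + 1) =
      (a + 1) * Fintype.card α - (Finset.univ.filter p).card := by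
  have hcard := Finset.card_filter_add_card_filter_not (s := Finset.univ) p
  rw [Finset.card_univ] at hcard
  rw [Finset.sum_ite, Finset.sum_const, Finset.sum_const, smul_eq_mul, smul_eq_mul, ← hcard]
  symm
  apply Nat.sub_eq_of_eq_add
  ring

namespace Cgraph

variable {l m k : ℕ} {S : Fin m → Finset (Fin l)} {A : Finset (Fin m)}

lemma adj_t_ve :
    (Cgraph l m k S A).Adj (Sum.inl (Sum.inr ())) (Sum.inl (Sum.inl ())) := by
  simp [Cgraph]

lemma adj_t_x (i : Fin (l + m - k + 1)) :
    (Cgraph l m k S A).Adj (Sum.inl (Sum.inr ())) (Sum.inr (Sum.inr (Sum.inr i))) := by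
  simp [Cgraph]

lemma adj_t_S_iff (i : Fin m) :
    (Cgraph l m k S A).Adj (Sum.inl (Sum.inr ())) (Sum.inr (Sum.inl (Sum.inl i))) ↔ i ∈ A := by
  simp [Cgraph]

lemma adj_ve_S (i : Fin m) :
    (Cgraph l m k S A).Adj (Sum.inl (Sum.inl ())) (Sum.inr (Sum.inl (Sum.inl i))) := by
  simp [Cgraph]

lemma adj_ve_w (j : Fin l) :
    (Cgraph l m k S A).Adj (Sum.inl (Sum.inl ())) (Sum.inr (Sum.inr (Sum.inl j))) := by
  simp [Cgraph]

lemma adj_w_u (j : Fin l) :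
    (Cgraph l m k S A).Adj (Sum.inr (Sum.inr (Sum.inl j))) (Sum.inr (Sum.inl (Sum.inr j))) := by
  simp [Cgraph]

lemma adj_S_u_iff (i : Fin m) (j : Fin l) :
    (Cgraph l m k S A).Adj (Sum.inr (Sum.inl (Sum.inl i))) (Sum.inr (Sum.inl (Sum.inr j))) ↔
      j ∈ S i := by
  simp [Cgraph]

lemma not_adj_t_u (j : Fin l) :
    ¬(Cgraph l m k S A).Adj (Sum.inl (Sum.inr ())) (Sum.inr (Sum.inl (Sum.inr j))) := by
  simp [Cgraph]

lemma not_adj_t_w (j : Fin l) :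
    ¬(Cgraph l m k S A).Adj (Sum.inl (Sum.inr ())) (Sum.inr (Sum.inr (Sum.inl j))) := by
  simp [Cgraph]

lemma dist_t_ve :
    (Cgraph l m k S A).dist (Sum.inl (Sum.inr ())) (Sum.inl (Sum.inl ())) = 1 :=
  SimpleGraph.dist_eq_one_iff_adj.mpr adj_t_ve

lemma dist_t_x (i : Fin (l + m - k + 1)) :
    (Cgraph l m k S A).dist (Sum.inl (Sum.inr ())) (Sum.inr (Sum.inr (Sum.inr i))) = 1 :=
  SimpleGraph.dist_eq_one_iff_adj.mpr (adj_t_x i)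

lemma dist_t_w (j : Fin l) :
    (Cgraph l m k S A).dist (Sum.inl (Sum.inr ())) (Sum.inr (Sum.inr (Sum.inl j))) = 2 :=
  SimpleGraph.dist_eq_two_of_adj_of_adj (by simp) (not_adj_t_w j) adj_t_ve (adj_ve_w j)

lemma dist_t_S (i : Fin m) :
    (Cgraph l m k S A).dist (Sum.inl (Sum.inr ())) (Sum.inr (Sum.inl (Sum.inl i))) =
      if i ∈ A then 1 else 2 := by
  split_ifs with hi
  · exact SimpleGraph.dist_eq_one_iff_adj.mpr ((adj_t_S_iff i).mpr hi)
  · exact SimpleGraph.dist_eq_two_of_adj_of_adj (by simp) (mt (adj_t_S_iff i).mp hi)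
      adj_t_ve (adj_ve_S i)

lemma dist_t_u (j : Fin l) :
    (Cgraph l m k S A).dist (Sum.inl (Sum.inr ())) (Sum.inr (Sum.inl (Sum.inr j))) =
      if ∃ i ∈ A, j ∈ S i then 2 else 3 := by
  split_ifs with hj
  · obtain ⟨i, hiA, hji⟩ := hj
    exact SimpleGraph.dist_eq_two_of_adj_of_adj (by simp) (not_adj_t_u j)
      ((adj_t_S_iff i).mpr hiA) ((adj_S_u_iff i j).mpr hji)
  · refine SimpleGraph.dist_eq_three_of_adj_of_adj_of_adj (not_adj_t_u j) ?_ adj_t_ve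
      (adj_ve_w j) (adj_w_u j)
    rintro ((_ | _) | (i | j') | (j' | i)) ht hu <;> simp_all [Cgraph]

lemma sum_dist_t_u :
    ∑ j : Fin l, (Cgraph l m k S A).dist (Sum.inl (Sum.inr ())) (Sum.inr (Sum.inl (Sum.inr j))) =
      3 * l - (Finset.univ.filter fun j : Fin l => ∃ i ∈ A, j ∈ S i).card := by
  simp only [dist_t_u]
  simpa using Fintype.sum_ite_self_succ (fun j : Fin l => ∃ i ∈ A, j ∈ S i) 2

lemma sum_dist_t_S :
    ∑ i : Fin m, (Cgraph l m k S A).dist (Sum.inl (Sum.inr ())) (Sum.inr (Sum.inl (Sum.inl i))) =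
      2 * m - A.card := by
  simp only [dist_t_S]
  simpa using Fintype.sum_ite_self_succ (· ∈ A) 1

lemma dsum_t_eq :
    Dsum (Cgraph l m k S A) (Sum.inl (Sum.inr ())) =
      (∑ i : Fin m,
          (Cgraph l m k S A).dist (Sum.inl (Sum.inr ())) (Sum.inr (Sum.inl (Sum.inl i)))) +
        (∑ j : Fin l,
          (Cgraph l m k S A).dist (Sum.inl (Sum.inr ())) (Sum.inr (Sum.inl (Sum.inr j)))) +
        2 * l + (l + m - k + 1) + 1 := by
  simp only [Dsum, Fintype.sum_sum_type, Fintype.sum_unique, PUnit.default_eq_unit, dist_t_ve,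
    SimpleGraph.dist_self, dist_t_w, dist_t_x, Finset.sum_const, Finset.card_univ,
    Fintype.card_fin, smul_eq_mul]
  ring

end Cgraph

theorem Dsum_t_general (l m k : ℕ) (hkm : k ≤ m) (S : Fin m → Finset (Fin l))
    (A : Finset (Fin m)) :
    let G' := Cgraph l m k S A
    let dt := (∑ j : Fin l, G'.dist (Sum.inl (Sum.inr ())) (Sum.inr (Sum.inl (Sum.inr j))))
      + (∑ i : Fin m, G'.dist (Sum.inl (Sum.inr ())) (Sum.inr (Sum.inl (Sum.inl i))))
    let UA := Finset.univ.filter (fun j : Fin l => ∃ i ∈ A, j ∈ S i)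
    Dsum G' (Sum.inl (Sum.inr ())) = 3 * l + m - k + 2 + dt ∧
      dt = 3 * l - UA.card + 2 * m - A.card := by
  have hUA : (Finset.univ.filter fun j : Fin l => ∃ i ∈ A, j ∈ S i).card ≤ l :=
    (Finset.card_le_univ _).trans_eq (Fintype.card_fin l)
  have hA : A.card ≤ m := (Finset.card_le_univ A).trans_eq (Fintype.card_fin m)
  simp only [Cgraph.dsum_t_eq, Cgraph.sum_dist_t_u, Cgraph.sum_dist_t_S]
  omega

/-- With `d_t = Σ_{u_i ∈ U} d(t,u_i) + Σ_{S_i ∈ S} d(t,S_i)`, the sum of distances from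
`t` to all other nodes equals `3l + m - k + 2 + d_t`, and moreover
`d_t = 3l - |U_A| + 2m - |A*|`, where `U_A` is the set of universe elements covered by
some set `S_j` with `(t, S_j) ∈ A*`. -/
theorem Dsum_t (l m k : ℕ) (hkm : k ≤ m) (S : Fin m → Finset (Fin l))
    (h3 : ∀ i, (S i).card = 3) (A : Finset (Fin m)) :
    let G' := Cgraph l m k S A
    let dt := (∑ j : Fin l, G'.dist (Sum.inl (Sum.inr ())) (Sum.inr (Sum.inl (Sum.inr j))))
      + (∑ i : Fin m, G'.dist (Sum.inl (Sum.inr ())) (Sum.inr (Sum.inl (Sum.inl i))))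
    let UA := Finset.univ.filter (fun j : Fin l => ∃ i ∈ A, j ∈ S i)
    Dsum G' (Sum.inl (Sum.inr ())) = 3 * l + m - k + 2 + dt ∧
      dt = 3 * l - UA.card + 2 * m - A.card :=
  Dsum_t_general l m k hkm S A
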